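/- arXiv:1307.3204 — 3 statements merged into one kernel-verified Lean document; each statement's English description precedes it below -/
import Mathlib

section
/- Let g(z) = Σ_{n≥1} c_n z^n with c_n ≥ 0 and Σ_{n≥1} c_n = r² < 1. If the power series Σ c_n z^n has radius of convergence exactly 1, then the power series of 1/(1 - g(z)) about 0 also has radius of convergence exactly 1. -/
/-!
For `n ≥ 1`, `a n` is a combination of earlier coefficients with nonnegative weights `c k` of
total mass at most `r² ≤ 1`, so by strong induction `0 ≤ a n ≤ 1`, and `∑ a n x^n` converges on
`[0, 1)` by comparison with the geometric series. Conversely `c n ≤ a n` for `n ≥ 1`, so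
`∑ a n x^n` diverges wherever `∑ c n x^n` does.
-/

open Finset

section Renewal

variable {c a : ℕ → ℝ}

theorem renewal_nonneg (hc : ∀ n, 0 ≤ c n) (ha0 : 0 ≤ a 0)
    (ha : ∀ n, 1 ≤ n → a n = ∑ k ∈ Icc 1 n, c k * a (n - k)) (n : ℕ) : 0 ≤ a n := by
  induction n using Nat.strong_induction_on with
  | _ n ih =>
    rcases Nat.eq_zero_or_pos n with rfl | hn
    · exact ha0
    · rw [ha n hn]
      refine sum_nonneg fun k hk => mul_nonneg (hc k) (ih _ ?_)
      rw [mem_Icc] at hk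
      omega

theorem renewal_le_one (hc : ∀ n, 0 ≤ c n) (hc1 : ∀ n, ∑ k ∈ Icc 1 n, c k ≤ 1)
    (ha0 : a 0 ≤ 1) (ha : ∀ n, 1 ≤ n → a n = ∑ k ∈ Icc 1 n, c k * a (n - k)) (n : ℕ) :
    a n ≤ 1 := by
  induction n using Nat.strong_induction_on with
  | _ n ih =>
    rcases Nat.eq_zero_or_pos n with rfl | hn
    · exact ha0
    · calc a n = ∑ k ∈ Icc 1 n, c k * a (n - k) := ha n hn
        _ ≤ ∑ k ∈ Icc 1 n, c k := sum_le_sum fun k hk => by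
            rw [mem_Icc] at hk
            exact mul_le_of_le_one_right (hc k) (ih _ (by omega))
        _ ≤ 1 := hc1 n

theorem le_renewal (hc : ∀ n, 0 ≤ c n) (ha0 : a 0 = 1)
    (ha : ∀ n, 1 ≤ n → a n = ∑ k ∈ Icc 1 n, c k * a (n - k)) {n : ℕ} (hn : 1 ≤ n) :
    c n ≤ a n := by
  have ha_nonneg := renewal_nonneg hc (ha0 ▸ zero_le_one) ha
  calc c n = c n * a (n - n) := by simp [ha0]
    _ ≤ ∑ k ∈ Icc 1 n, c k * a (n - k) :=
        single_le_sum (fun k _ => mul_nonneg (hc k) (ha_nonneg _)) (mem_Icc.mpr ⟨hn, le_rfl⟩)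
    _ = a n := (ha n hn).symm

end Renewal

theorem summable_mul_pow_of_mem_Icc {a : ℕ → ℝ} (ha : ∀ n, a n ∈ Set.Icc 0 1) {x : ℝ}
    (hx0 : 0 ≤ x) (hx1 : x < 1) : Summable fun n => a n * x ^ n :=
  (summable_geometric_of_lt_one hx0 hx1).of_nonneg_of_le
    (fun n => mul_nonneg (ha n).1 (pow_nonneg hx0 n))
    (fun n => mul_le_of_le_one_left (pow_nonneg hx0 n) (ha n).2)

theorem summable_mul_pow_of_le_of_summable {c a : ℕ → ℝ} (hc : ∀ n, 0 ≤ c n)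
    (hca : ∀ n, 1 ≤ n → c n ≤ a n) {x : ℝ} (hx : 0 ≤ x)
    (hsum : Summable fun n => a n * x ^ n) : Summable fun n => c n * x ^ n := by
  refine (summable_nat_add_iff 1).mp ((summable_nat_add_iff 1).mpr hsum |>.of_nonneg_of_le
    (fun n => mul_nonneg (hc _) (pow_nonneg hx _)) fun n => ?_)
  exact mul_le_mul_of_nonneg_right (hca _ (Nat.le_add_left 1 n)) (pow_nonneg hx _)

theorem stmt6_general (c a : ℕ → ℝ) (r : ℝ)
    (hc : ∀ n, 0 ≤ c n)
    (hcs : Summable c) (hcsum : ∑' n, c n = r ^ 2) (hr0 : 0 ≤ r) (hr : r < 1)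
    (hrad : ∀ x : ℝ, 1 < x → ¬ Summable (fun n => c n * x ^ n))
    (ha0 : a 0 = 1)
    (ha : ∀ n, 1 ≤ n → a n = ∑ k ∈ Finset.Icc 1 n, c k * a (n - k)) :
    (∀ x : ℝ, 0 ≤ x → x < 1 → Summable (fun n => a n * x ^ n)) ∧
    (∀ x : ℝ, 1 < x → ¬ Summable (fun n => a n * x ^ n)) := by
  have hc1 : ∀ n, ∑ k ∈ Icc 1 n, c k ≤ 1 := fun n =>
    (hcs.sum_le_tsum _ fun i _ => hc i).trans (hcsum ▸ pow_le_one₀ hr0 hr.le)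
  have ha_mem : ∀ n, a n ∈ Set.Icc 0 1 := fun n =>
    ⟨renewal_nonneg hc (ha0 ▸ zero_le_one) ha n, renewal_le_one hc hc1 ha0.le ha n⟩
  refine ⟨fun x hx0 hx1 => summable_mul_pow_of_mem_Icc ha_mem hx0 hx1, fun x hx hsum => ?_⟩
  exact hrad x hx (summable_mul_pow_of_le_of_summable hc (fun n hn => le_renewal hc ha0 ha hn)
    (by linarith) hsum)

/-- let `g z = ∑_{n≥1} c n z^n` with `c n ≥ 0`, `∑ c n = r² < 1`,
and suppose the series `∑ c n z^n` has radius of convergence exactly 1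
(it converges for `|x| < 1` and diverges for every `x > 1`). Then the Taylor
series of `1/(1-g)` at `0`, whose coefficients `a n` satisfy `a 0 = 1`,
`a n = ∑_{k=1}^n c k * a (n-k)`, also has radius of convergence exactly 1. -/
theorem stmt6 (c a : ℕ → ℝ) (r : ℝ)
    (hc : ∀ n, 0 ≤ c n) (hc0 : c 0 = 0)
    (hcs : Summable c) (hcsum : ∑' n, c n = r ^ 2) (hr0 : 0 ≤ r) (hr : r < 1)
    (hrad : ∀ x : ℝ, 1 < x → ¬ Summable (fun n => c n * x ^ n))
    (ha0 : a 0 = 1)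
    (ha : ∀ n, 1 ≤ n → a n = ∑ k ∈ Finset.Icc 1 n, c k * a (n - k)) :
    (∀ x : ℝ, 0 ≤ x → x < 1 → Summable (fun n => a n * x ^ n)) ∧
    (∀ x : ℝ, 1 < x → ¬ Summable (fun n => a n * x ^ n)) :=
  stmt6_general c a r hc hcs hcsum hr0 hr hrad ha0 ha
end

section
/- Let V ⊆ 𝔻 and λ, μ ∈ V. Let ρ_λ, ρ_μ be the evaluation characters on the multiplier algebra Mult(H) of a reproducing kernel Hilbert space H on V with the Nevanlinna–Pick property (e.g., H = H² on V = 𝔻, Mult(H) = H^∞). Then d(λ,μ) ≤ ‖ρ_λ - ρ_μ‖ ≤ 2 d(λ,μ), where d is the pseudohyperbolic distance and the norm is the norm of the linear functional on Mult(H). -/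
/-!
The Möbius automorphism `φ_μ z = (z - μ) / (1 - z μ̄)` of the disc vanishes at `μ`, has
`|φ_μ λ| = d(λ, μ)`, and is inverted by `φ_{-μ}`. Being a contractive multiplier, `φ_μ` itself
gives the lower bound. For the upper bound, `g = f ∘ φ_{-μ}` maps the disc into the disc, hence
into the closed disc of radius `2` about `g 0 = f μ`, so the Schwarz lemma gives
`|f λ - f μ| = |g (φ_μ λ) - g 0| ≤ 2 |φ_μ λ|`.
-/

open Metric Complex ComplexConjugate

noncomputable def mobius (a z : ℂ) : ℂ := (z - a) / (1 - z * conj a)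

lemma normSq_one_sub_mul_conj (z a : ℂ) :
    normSq (1 - z * conj a) = normSq (z - a) + (1 - normSq z) * (1 - normSq a) := by
  simp only [normSq_apply, sub_re, sub_im, mul_re, mul_im, one_re, one_im, conj_re, conj_im]
  ring

lemma one_sub_mul_conj_ne_zero {z a : ℂ} (hz : ‖z‖ ≤ 1) (ha : ‖a‖ < 1) :
    1 - z * conj a ≠ 0 := by
  refine sub_ne_zero.mpr (ne_of_apply_ne norm (ne_of_gt ?_))
  rw [norm_mul, norm_conj, norm_one]
  nlinarith [norm_nonneg z, norm_nonneg a]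

lemma mapsTo_mobius {a : ℂ} (ha : a ∈ ball (0 : ℂ) 1) :
    Set.MapsTo (mobius a) (ball 0 1) (ball 0 1) := by
  intro z hz
  rw [mem_ball_zero_iff] at ha hz ⊢
  have hden := one_sub_mul_conj_ne_zero hz.le ha
  rw [mobius, norm_div, div_lt_one (norm_pos_iff.mpr hden)]
  refine lt_of_pow_lt_pow_left₀ 2 (norm_nonneg _) ?_
  have hz' : normSq z < 1 := by rw [← Complex.sq_norm]; nlinarith [norm_nonneg z]
  have ha' : normSq a < 1 := by rw [← Complex.sq_norm]; nlinarith [norm_nonneg a]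
  rw [Complex.sq_norm, Complex.sq_norm, normSq_one_sub_mul_conj]
  nlinarith

lemma differentiableOn_mobius {a : ℂ} (ha : a ∈ ball (0 : ℂ) 1) :
    DifferentiableOn ℂ (mobius a) (ball 0 1) :=
  (differentiableOn_id.sub_const a).div
    ((differentiableOn_id.mul_const _).const_sub 1)
    fun _ hz ↦ one_sub_mul_conj_ne_zero (mem_ball_zero_iff.mp hz).le (mem_ball_zero_iff.mp ha)

lemma mobius_self (a : ℂ) : mobius a a = 0 := by simp [mobius]

lemma mobius_neg_zero (a : ℂ) : mobius (-a) 0 = a := by simp [mobius]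

lemma mobius_neg_mobius {a z : ℂ} (ha : a ∈ ball (0 : ℂ) 1) (hz : z ∈ ball (0 : ℂ) 1) :
    mobius (-a) (mobius a z) = z := by
  have hden := one_sub_mul_conj_ne_zero (mem_ball_zero_iff.mp hz).le (mem_ball_zero_iff.mp ha)
  have hden' := one_sub_mul_conj_ne_zero (a := -a)
    (mem_ball_zero_iff.mp (mapsTo_mobius ha hz)).le (by simpa using mem_ball_zero_iff.mp ha)
  rw [mobius, div_eq_iff hden']
  simp only [mobius, map_neg]
  field_simp
  ring

lemma norm_sub_le_two_mul_norm_mobius {f : ℂ → ℂ} (hd : DifferentiableOn ℂ f (ball 0 1))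
    (hb : ∀ z ∈ ball (0 : ℂ) 1, ‖f z‖ ≤ 1) {l m : ℂ}
    (hl : l ∈ ball (0 : ℂ) 1) (hm : m ∈ ball (0 : ℂ) 1) :
    ‖f l - f m‖ ≤ 2 * ‖mobius m l‖ := by
  have hm' : -m ∈ ball (0 : ℂ) 1 := by simpa using hm
  have hg : DifferentiableOn ℂ (f ∘ mobius (-m)) (ball 0 1) :=
    hd.comp (differentiableOn_mobius hm') (mapsTo_mobius hm')
  have hmaps : Set.MapsTo (f ∘ mobius (-m)) (ball 0 1)
      (closedBall ((f ∘ mobius (-m)) 0) 2) := by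
    intro z hz
    rw [mem_closedBall, Function.comp_apply, Function.comp_apply, mobius_neg_zero, dist_eq_norm]
    linarith [norm_sub_le (f (mobius (-m) z)) (f m), hb _ (mapsTo_mobius hm' hz), hb m hm]
  simpa [mobius_neg_mobius hm hl, mobius_neg_zero, dist_eq_norm] using
    dist_le_div_mul_dist_of_mapsTo_ball hg hmaps (mapsTo_mobius hm hl)

/-- instance `H = H²` on `𝔻`, `Mult(H) = H^∞`: for `λ, μ ∈ 𝔻`,
`d(λ,μ) ≤ ‖ρ_λ - ρ_μ‖ ≤ 2 d(λ,μ)`, where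
`‖ρ_λ - ρ_μ‖ = sup {|f λ - f μ| : f ∈ H^∞, ‖f‖_∞ ≤ 1}` and `d` is the
pseudohyperbolic distance. -/
theorem stmt12 (l m : ℂ) (hl : l ∈ ball (0 : ℂ) 1) (hm : m ∈ ball (0 : ℂ) 1) :
    ‖l - m‖ / ‖1 - l * (starRingEnd ℂ) m‖ ≤
      sSup {x : ℝ | ∃ f : ℂ → ℂ, DifferentiableOn ℂ f (ball 0 1) ∧
        (∀ z ∈ ball (0 : ℂ) 1, ‖f z‖ ≤ 1) ∧
        x = ‖f l - f m‖} ∧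
    sSup {x : ℝ | ∃ f : ℂ → ℂ, DifferentiableOn ℂ f (ball 0 1) ∧
        (∀ z ∈ ball (0 : ℂ) 1, ‖f z‖ ≤ 1) ∧
        x = ‖f l - f m‖} ≤
      2 * (‖l - m‖ / ‖1 - l * (starRingEnd ℂ) m‖) := by
  set S := {x : ℝ | ∃ f : ℂ → ℂ, DifferentiableOn ℂ f (ball 0 1) ∧
    (∀ z ∈ ball (0 : ℂ) 1, ‖f z‖ ≤ 1) ∧ x = ‖f l - f m‖}
  have hd : ‖l - m‖ / ‖1 - l * conj m‖ = ‖mobius m l‖ := (norm_div _ _).symm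
  have hmobius_mem : ‖mobius m l‖ ∈ S :=
    ⟨mobius m, differentiableOn_mobius hm, fun z hz ↦ (mem_ball_zero_iff.mp
      (mapsTo_mobius hm hz)).le, by rw [mobius_self, sub_zero]⟩
  have hupper : ∀ x ∈ S, x ≤ 2 * ‖mobius m l‖ := by
    rintro x ⟨f, hfd, hfb, rfl⟩
    exact norm_sub_le_two_mul_norm_mobius hfd hfb hl hm
  rw [hd]
  exact ⟨le_csSup ⟨_, hupper⟩ hmobius_mem, csSup_le ⟨_, hmobius_mem⟩ hupper⟩
end

section
/- Let r ∈ (0,1), b(z) = (z - r)/(1 - r z), and f(z) = (z², b(z)²)/√2 mapping 𝔻 into ℂ². Then: (i) ‖f(z)‖ = 1 whenever |z| = 1, so f maps 𝔻 into the open unit ball B₂; (ii) f(w) = f(z) with z, w in the closed disc implies w = z or {z, w} = {1, -1}; in particular f is injective on 𝔻 and f(1) = f(-1); (iii) f'(z) ≠ 0 for all z in the closed disc. -/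
/-!
For `‖a‖ < 1` the identity `|1 - a̅ z|² - |z - a|² = (1 - |a|²)(1 - |z|²)` shows that the Möbius
factor `b z = (z - a) / (1 - a̅ z)` maps the unit circle to itself and the open disc into itself;
since `‖f z‖² = (|z|⁴ + |b z|⁴) / 2`, this gives (i). If `f w = f z` then `w = ± z`, and for real
`a = r` cross-multiplying `b(-z)² = b(z)²` leaves `4 r (1 - r²) z (1 - z²) = 0`. Finally
`f' = (2 z, 2 b b') / √2` can vanish only at `z = 0`, where `b(0) b'(0) = -a (1 - |a|²) ≠ 0`.
-/

open Metric
open ComplexConjugate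

noncomputable def mobiusFactor (a z : ℂ) : ℂ := (z - a) / (1 - conj a * z)

lemma mobiusFactor_ofReal (r : ℝ) (z : ℂ) : mobiusFactor r z = (z - r) / (1 - r * z) := by
  rw [mobiusFactor, Complex.conj_ofReal]

lemma norm_one_sub_conj_mul_sq_sub_norm_sub_sq (a z : ℂ) :
    ‖1 - conj a * z‖ ^ 2 - ‖z - a‖ ^ 2 = (1 - ‖a‖ ^ 2) * (1 - ‖z‖ ^ 2) := by
  simp only [Complex.sq_norm, Complex.normSq_apply, Complex.sub_re, Complex.sub_im,
    Complex.mul_re, Complex.mul_im, Complex.one_re, Complex.one_im, Complex.conj_re,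
    Complex.conj_im]
  ring

lemma norm_div_sqrt_two_sq (x : ℂ) : ‖x / (Real.sqrt 2 : ℂ)‖ ^ 2 = ‖x‖ ^ 2 / 2 := by
  rw [norm_div, div_pow, Complex.norm_of_nonneg (Real.sqrt_nonneg 2),
    Real.sq_sqrt zero_le_two]

lemma ofReal_sqrt_two_ne_zero : (Real.sqrt 2 : ℂ) ≠ 0 := by
  exact_mod_cast (Real.sqrt_pos.mpr zero_lt_two).ne'

noncomputable def mobiusSquareMap (a z : ℂ) : ℂ × ℂ :=
  (z ^ 2 / Real.sqrt 2, mobiusFactor a z ^ 2 / Real.sqrt 2)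

lemma norm_fst_sq_add_norm_snd_sq_mobiusSquareMap (a z : ℂ) :
    ‖(mobiusSquareMap a z).1‖ ^ 2 + ‖(mobiusSquareMap a z).2‖ ^ 2 =
      (‖z‖ ^ 4 + ‖mobiusFactor a z‖ ^ 4) / 2 := by
  rw [mobiusSquareMap, norm_div_sqrt_two_sq, norm_div_sqrt_two_sq, norm_pow, norm_pow]
  ring

section

variable {a z : ℂ}

lemma one_sub_conj_mul_ne_zero (ha : ‖a‖ < 1) (hz : ‖z‖ ≤ 1) : 1 - conj a * z ≠ 0 := by
  have : ‖conj a * z‖ < 1 := by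
    rw [norm_mul, Complex.norm_conj]
    nlinarith [norm_nonneg a, norm_nonneg z]
  intro h
  rw [← sub_eq_zero.mp h, norm_one] at this
  exact this.false

lemma norm_mobiusFactor_of_norm_eq_one (ha : ‖a‖ < 1) (hz : ‖z‖ = 1) :
    ‖mobiusFactor a z‖ = 1 := by
  have hden := norm_pos_iff.mpr (one_sub_conj_mul_ne_zero ha hz.le)
  have key := norm_one_sub_conj_mul_sq_sub_norm_sub_sq a z
  rw [hz] at key
  rw [mobiusFactor, norm_div, div_eq_one_iff_eq hden.ne']
  nlinarith [norm_nonneg (z - a)]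

lemma norm_mobiusFactor_lt_one (ha : ‖a‖ < 1) (hz : ‖z‖ < 1) : ‖mobiusFactor a z‖ < 1 := by
  have hden := norm_pos_iff.mpr (one_sub_conj_mul_ne_zero ha hz.le)
  have key := norm_one_sub_conj_mul_sq_sub_norm_sub_sq a z
  have hpos : 0 < (1 - ‖a‖ ^ 2) * (1 - ‖z‖ ^ 2) := by
    apply mul_pos <;> nlinarith [norm_nonneg a, norm_nonneg z]
  rw [mobiusFactor, norm_div, div_lt_one hden]
  nlinarith [norm_nonneg (z - a)]

lemma hasDerivAt_mobiusFactor (hz : 1 - conj a * z ≠ 0) :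
    HasDerivAt (mobiusFactor a) ((1 - ‖a‖ ^ 2) / (1 - conj a * z) ^ 2) z := by
  have hnum : HasDerivAt (fun z ↦ z - a) 1 z := (hasDerivAt_id z).sub_const a
  have hden : HasDerivAt (fun z ↦ 1 - conj a * z) (-conj a) z := by
    simpa using ((hasDerivAt_id z).const_mul (conj a)).const_sub 1
  refine (hnum.div hden hz).congr_deriv ?_
  rw [← Complex.conj_mul']
  ring

lemma hasDerivAt_mobiusSquareMap (hz : 1 - conj a * z ≠ 0) :
    HasDerivAt (mobiusSquareMap a) (2 * z / Real.sqrt 2,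
      2 * mobiusFactor a z * ((1 - ‖a‖ ^ 2) / (1 - conj a * z) ^ 2) / Real.sqrt 2) z := by
  refine ((hasDerivAt_pow 2 z).div_const _).prodMk
    (((hasDerivAt_mobiusFactor hz).pow 2).div_const _) |>.congr_deriv ?_
  simp

lemma deriv_mobiusSquareMap_ne_zero (ha0 : a ≠ 0) (ha : ‖a‖ < 1) (hz : ‖z‖ ≤ 1) :
    deriv (mobiusSquareMap a) z ≠ 0 := by
  rw [(hasDerivAt_mobiusSquareMap (one_sub_conj_mul_ne_zero ha hz)).deriv]
  intro h
  obtain ⟨h1, h2⟩ := Prod.mk_eq_zero.mp h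
  obtain rfl : z = 0 := by simpa [ofReal_sqrt_two_ne_zero] using h1
  have ha2 : (1 : ℂ) - ‖a‖ ^ 2 ≠ 0 := by
    exact_mod_cast (sub_pos.mpr (pow_lt_one₀ (norm_nonneg a) ha two_ne_zero)).ne'
  simp [mobiusFactor, ha0, ha2] at h2

end

lemma mobiusFactor_ofReal_neg_sq_eq_sq {r : ℝ} (hr0 : r ≠ 0) (hr1 : |r| < 1) {z : ℂ}
    (hz : ‖z‖ ≤ 1) (h : mobiusFactor r (-z) ^ 2 = mobiusFactor r z ^ 2) :
    z = 0 ∨ z = 1 ∨ z = -1 := by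
  have hr : ‖(r : ℂ)‖ < 1 := by rwa [Complex.norm_real]
  have hdz := one_sub_conj_mul_ne_zero hr hz
  have hdw := one_sub_conj_mul_ne_zero hr (z := -z) (by rwa [norm_neg])
  rw [Complex.conj_ofReal] at hdz hdw
  rw [mobiusFactor_ofReal, mobiusFactor_ofReal, div_pow, div_pow,
    div_eq_div_iff (pow_ne_zero 2 hdw) (pow_ne_zero 2 hdz)] at h
  have hr2 : (1 : ℂ) - r ^ 2 ≠ 0 := by
    exact_mod_cast (sub_pos.mpr ((sq_lt_one_iff_abs_lt_one r).mpr hr1)).ne'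
  have key : (4 * r * (1 - r ^ 2) : ℂ) * (z * (z - 1) * (z + 1)) = 0 := by
    linear_combination -h
  have hc : (4 * r * (1 - r ^ 2) : ℂ) ≠ 0 := by simp [hr0, hr2]
  simpa [sub_eq_zero, add_eq_zero_iff_eq_neg, or_assoc] using
    (mul_eq_zero.mp key).resolve_left hc

lemma eq_of_mobiusSquareMap_ofReal_eq {r : ℝ} (hr0 : r ≠ 0) (hr1 : |r| < 1) {z w : ℂ}
    (hz : ‖z‖ ≤ 1) (h : mobiusSquareMap r w = mobiusSquareMap r z) :
    w = z ∨ (z = 1 ∧ w = -1) ∨ (z = -1 ∧ w = 1) := by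
  rw [mobiusSquareMap, mobiusSquareMap, Prod.mk.injEq, div_left_inj' ofReal_sqrt_two_ne_zero,
    div_left_inj' ofReal_sqrt_two_ne_zero, sq_eq_sq_iff_eq_or_eq_neg] at h
  obtain ⟨rfl | rfl, hb⟩ := h
  · exact .inl rfl
  · rcases mobiusFactor_ofReal_neg_sq_eq_sq hr0 hr1 hz hb with rfl | rfl | rfl <;> simp

/-- for `0 < r < 1`, `b z = (z - r)/(1 - r z)` and
`f z = (z², b z²)/√2 : ℂ → ℂ²`:
(i) `‖f z‖ = 1` on the circle and `f` maps `𝔻` into the open unit ball `B₂`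
    (in the Euclidean/Hermitian norm, `|f₁|² + |f₂|² `);
(ii) `f w = f z` on the closed disc implies `w = z` or `{z, w} = {1, -1}`
    (in particular `f` is injective on `𝔻` and `f 1 = f (-1)`);
(iii) `f' z ≠ 0` on the closed disc. -/
theorem stmt17 (r : ℝ) (hr0 : 0 < r) (hr1 : r < 1) (f : ℂ → ℂ × ℂ)
    (hf : ∀ z : ℂ, f z =
      (z ^ 2 / ((Real.sqrt 2 : ℝ) : ℂ),
       ((z - (r : ℂ)) / (1 - (r : ℂ) * z)) ^ 2 / ((Real.sqrt 2 : ℝ) : ℂ))) :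
    (∀ z : ℂ, ‖z‖ = 1 →
        ‖(f z).1‖ ^ 2 + ‖(f z).2‖ ^ 2 = 1) ∧
    (∀ z : ℂ, ‖z‖ < 1 →
        ‖(f z).1‖ ^ 2 + ‖(f z).2‖ ^ 2 < 1) ∧
    (∀ z ∈ closedBall (0 : ℂ) 1, ∀ w ∈ closedBall (0 : ℂ) 1, f w = f z →
        w = z ∨ (z = 1 ∧ w = -1) ∨ (z = -1 ∧ w = 1)) ∧
    (∀ z ∈ closedBall (0 : ℂ) 1, deriv f z ≠ 0) := by
  obtain rfl : f = mobiusSquareMap r :=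
    funext fun z ↦ by rw [hf, mobiusSquareMap, mobiusFactor_ofReal]
  have hr : ‖(r : ℂ)‖ < 1 := by rwa [Complex.norm_of_nonneg hr0.le]
  simp only [mem_closedBall_zero_iff, norm_fst_sq_add_norm_snd_sq_mobiusSquareMap]
  refine ⟨fun z hz ↦ ?_, fun z hz ↦ ?_, fun z hz w _ ↦ ?_, fun z hz ↦ ?_⟩
  · rw [hz, norm_mobiusFactor_of_norm_eq_one hr hz]
    norm_num
  · have := pow_lt_one₀ (norm_nonneg z) hz (n := 4) (by norm_num)
    have := pow_lt_one₀ (norm_nonneg _) (norm_mobiusFactor_lt_one hr hz) (n := 4) (by norm_num)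
    linarith
  · exact eq_of_mobiusSquareMap_ofReal_eq hr0.ne' (abs_lt.mpr ⟨by linarith, hr1⟩) hz
  · exact deriv_mobiusSquareMap_ne_zero (by exact_mod_cast hr0.ne') hr hz
end
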